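/- Let 0 < α < n, 0 < β < 1, with α+β < n, and suppose b ∈ Λ̇_β(ℝⁿ). Then for every cube Q and every x ∈ Q: ||Q|^{−α/n} M_{α,Q}(b)(x) − M_Q(b)(x)| ≤ |Q|^{−α/n}|[|b|,M_α](χ_Q)(x)| + |[|b|,M](χ_Q)(x)|, and consequently (1/|Q|^{1+β/n}) ∫_Q ||Q|^{−α/n} M_{α,Q}(b)(x) − M_Q(b)(x)| dx ≤ C‖b‖_{Λ̇_β} with C independent of Q. -/

import Mathlib

open MeasureTheory ENNReal Set

noncomputable section

/-- An axis-parallel (closed) cube in `ℝⁿ`. -/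
def IsCube (n : ℕ) (Q : Set (Fin n → ℝ)) : Prop :=
  ∃ (c : Fin n → ℝ) (h : ℝ), 0 < h ∧ Q = Set.univ.pi fun i => Set.Icc (c i) (c i + h)

/-- The fractional maximal function `M_γ f (x) = sup_{Q ∋ x} |Q|^{γ/n-1} ∫_Q |f|`. -/
def fracMax (n : ℕ) (γ : ℝ) (f : (Fin n → ℝ) → ℝ) (x : Fin n → ℝ) : ℝ≥0∞ :=
  ⨆ (Q : Set (Fin n → ℝ)) (_ : IsCube n Q) (_ : x ∈ Q),
    volume Q ^ (γ / n - 1) * ∫⁻ y in Q, ‖f y‖₊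

/-- The local fractional maximal function relative to a cube `Q₀`. -/
def localFracMax (n : ℕ) (γ : ℝ) (Q₀ : Set (Fin n → ℝ)) (f : (Fin n → ℝ) → ℝ)
    (x : Fin n → ℝ) : ℝ≥0∞ :=
  ⨆ (Q : Set (Fin n → ℝ)) (_ : IsCube n Q) (_ : x ∈ Q) (_ : Q ⊆ Q₀),
    volume Q ^ (γ / n - 1) * ∫⁻ y in Q, ‖f y‖₊

/-- The maximal commutator `M_{α,b}`. -/
def maxComm (n : ℕ) (α : ℝ) (b f : (Fin n → ℝ) → ℝ) (x : Fin n → ℝ) : ℝ≥0∞ :=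
  ⨆ (Q : Set (Fin n → ℝ)) (_ : IsCube n Q) (_ : x ∈ Q),
    volume Q ^ (α / n - 1) * ∫⁻ y in Q, (‖b x - b y‖₊ : ℝ≥0∞) * ‖f y‖₊

/-- The nonlinear commutator `[b, M_α](f) = b · M_α(f) - M_α(b f)`. -/
def ncomm (n : ℕ) (α : ℝ) (b f : (Fin n → ℝ) → ℝ) (x : Fin n → ℝ) : ℝ :=
  b x * (fracMax n α f x).toReal - (fracMax n α (fun y => b y * f y) x).toReal

/-- Average of `b` over `Q`. -/
def cubeAvg (n : ℕ) (Q : Set (Fin n → ℝ)) (b : (Fin n → ℝ) → ℝ) : ℝ :=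
  (volume Q).toReal⁻¹ * ∫ x in Q, b x

/-! On a cube `Q ∋ x` one has `M_γ(χ_Q)(x) = |Q|^{γ/n}` and
`M_γ(|b| χ_Q)(x) = M_{γ,Q}(b)(x)` (every cube meeting `Q` can be traded for a no larger subcube
of `Q`), so `[|b|, M_γ](χ_Q)(x) = |b(x)| |Q|^{γ/n} - M_{γ,Q}(b)(x)`, and the pointwise inequality
is the triangle inequality through `|b(x)|`. If `|b|` oscillates by at most `δ` on `Q`, each
average of `|b|` over a subcube lies within `δ` of `|b(x)|`, so the commutator is at most
`|Q|^{γ/n} δ`. The Hölder condition gives `δ = L |Q|^{β/n}`, and averaging over `Q` yields the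
bound with `C = 2`. -/

namespace ENNReal

lemma rpow_le_rpow_of_nonpos {a b : ℝ≥0∞} {z : ℝ} (hab : a ≤ b) (hz : z ≤ 0) :
    b ^ z ≤ a ^ z := by
  rw [← neg_neg z, rpow_neg a, rpow_neg b, ENNReal.inv_le_inv]
  exact rpow_le_rpow hab (neg_nonneg.mpr hz)

lemma rpow_sub_one_mul_self {a : ℝ≥0∞} (ha0 : a ≠ 0) (hat : a ≠ ⊤) (z : ℝ) :
    a ^ (z - 1) * a = a ^ z := by
  conv_lhs => rhs; rw [← rpow_one a]
  rw [← rpow_add _ _ ha0 hat, sub_add_cancel]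

lemma tsub_add_tsub_eq_ofReal_abs {a b : ℝ≥0∞} (ha : a ≠ ⊤) (hb : b ≠ ⊤) :
    a - b + (b - a) = ENNReal.ofReal |a.toReal - b.toReal| := by
  rcases le_total a b with hab | hab
  · rw [tsub_eq_zero_of_le hab, zero_add, abs_sub_comm, abs_of_nonneg
      (sub_nonneg.mpr (toReal_mono hb hab)), ← toReal_sub_of_le hab hb, ofReal_toReal
      (sub_ne_top hb)]
  · rw [tsub_eq_zero_of_le hab, add_zero, abs_of_nonneg
      (sub_nonneg.mpr (toReal_mono ha hab)), ← toReal_sub_of_le hab ha, ofReal_toReal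
      (sub_ne_top ha)]

end ENNReal

lemma exists_Icc_add_min_subset (a a' h h' : ℝ) :
    ∃ r, Icc r (r + min h h') ⊆ Icc a (a + h) ∧
      Icc a' (a' + h') ∩ Icc a (a + h) ⊆ Icc r (r + min h h') := by
  refine ⟨min (max a a') (a + h - min h h'), ?_, ?_⟩ <;> intro y <;>
    simp only [mem_Icc, mem_inter_iff] <;> grind

section Cubes

variable {n : ℕ}

lemma volume_univ_pi_Icc_add (c : Fin n → ℝ) (h : ℝ) :
    volume (univ.pi fun i => Icc (c i) (c i + h)) = ENNReal.ofReal h ^ n := by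
  rw [volume_pi_pi]
  simp [Real.volume_Icc]

lemma dist_le_of_mem_univ_pi_Icc_add {c x y : Fin n → ℝ} {h : ℝ} (hh : 0 ≤ h)
    (hx : x ∈ univ.pi fun i => Icc (c i) (c i + h))
    (hy : y ∈ univ.pi fun i => Icc (c i) (c i + h)) : dist x y ≤ h := by
  refine (dist_pi_le_iff hh).2 fun i => ?_
  simpa using Real.dist_le_of_mem_Icc (hx i (mem_univ i)) (hy i (mem_univ i))

namespace IsCube

variable {Q Q' : Set (Fin n → ℝ)}

lemma measurableSet (hQ : IsCube n Q) : MeasurableSet Q := by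
  obtain ⟨c, h, -, rfl⟩ := hQ
  exact MeasurableSet.univ_pi fun _ => measurableSet_Icc

lemma volume_pos (hQ : IsCube n Q) : 0 < volume Q := by
  obtain ⟨c, h, hh, rfl⟩ := hQ
  rw [volume_univ_pi_Icc_add]
  exact ENNReal.pow_pos (ofReal_pos.mpr hh) n

lemma volume_ne_top (hQ : IsCube n Q) : volume Q ≠ ⊤ := by
  obtain ⟨c, h, -, rfl⟩ := hQ
  rw [volume_univ_pi_Icc_add]
  exact pow_ne_top ofReal_ne_top

lemma exists_subcube_of_inter (hQ : IsCube n Q) (hQ' : IsCube n Q') :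
    ∃ R, IsCube n R ∧ R ⊆ Q ∧ Q' ∩ Q ⊆ R ∧ volume R ≤ volume Q' := by
  obtain ⟨c, h, hh, rfl⟩ := hQ
  obtain ⟨c', h', hh', rfl⟩ := hQ'
  choose r hr using fun i => exists_Icc_add_min_subset (c i) (c' i) h h'
  refine ⟨univ.pi fun i => Icc (r i) (r i + min h h'), ⟨r, _, lt_min hh hh', rfl⟩,
    pi_mono fun i _ => (hr i).1, ?_, ?_⟩
  · rw [← pi_inter_distrib]
    exact pi_mono fun i _ => (hr i).2
  · rw [volume_univ_pi_Icc_add, volume_univ_pi_Icc_add]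
    gcongr
    exact min_le_right h h'

lemma abs_sub_le_of_holder (hn : n ≠ 0) {L β : ℝ} (hL : 0 ≤ L) (hβ : 0 ≤ β)
    {b : (Fin n → ℝ) → ℝ} (hb : ∀ x y, |b x - b y| ≤ L * dist x y ^ β)
    (hQ : IsCube n Q) {x y : Fin n → ℝ} (hx : x ∈ Q) (hy : y ∈ Q) :
    |b x - b y| ≤ L * (volume Q ^ (β / n)).toReal := by
  obtain ⟨c, h, hh, rfl⟩ := hQ
  have hside : (volume (univ.pi fun i => Icc (c i) (c i + h)) ^ (β / n)).toReal = h ^ β := by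
    rw [volume_univ_pi_Icc_add, ← rpow_natCast, ← rpow_mul,
      mul_div_cancel₀ β (Nat.cast_ne_zero.mpr hn), ← toReal_rpow, toReal_ofReal hh.le]
  rw [hside]
  calc |b x - b y| ≤ L * dist x y ^ β := hb x y
    _ ≤ L * h ^ β := by gcongr; exact dist_le_of_mem_univ_pi_Icc_add hh.le hx hy

end IsCube

end Cubes

section MaximalFunctions

variable {n : ℕ} {α γ δ : ℝ} {Q : Set (Fin n → ℝ)} {x : Fin n → ℝ}
  {b : (Fin n → ℝ) → ℝ}

lemma lintegral_nnnorm_indicator_one (hQ : MeasurableSet Q) (S : Set (Fin n → ℝ)) :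
    ∫⁻ y in S, (‖Q.indicator (fun _ => (1 : ℝ)) y‖₊ : ℝ≥0∞)
      = volume (Q ∩ S) := by
  have hind : ∀ y, (‖Q.indicator (fun _ => (1 : ℝ)) y‖₊ : ℝ≥0∞)
      = Q.indicator (fun _ => (1 : ℝ≥0∞)) y := by
    intro y
    by_cases hy : y ∈ Q <;> simp [hy]
  simp_rw [hind]
  rw [lintegral_indicator hQ, setLIntegral_one, Measure.restrict_apply hQ]

lemma lintegral_nnnorm_abs_mul_indicator (hQ : MeasurableSet Q) (S : Set (Fin n → ℝ)) :
    ∫⁻ y in S, (‖|b y| * Q.indicator (fun _ => (1 : ℝ)) y‖₊ : ℝ≥0∞)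
      = ∫⁻ y in S ∩ Q, (‖b y‖₊ : ℝ≥0∞) := by
  have hind : ∀ y, (‖|b y| * Q.indicator (fun _ => (1 : ℝ)) y‖₊ : ℝ≥0∞)
      = Q.indicator (fun y => (‖b y‖₊ : ℝ≥0∞)) y := by
    intro y
    by_cases hy : y ∈ Q <;> simp [hy]
  simp_rw [hind]
  rw [lintegral_indicator hQ, Measure.restrict_restrict hQ, inter_comm]

lemma fracMax_indicator_cube (h0 : 0 ≤ γ / n) (h1 : γ / n ≤ 1) (hQ : IsCube n Q)
    (hx : x ∈ Q) :
    fracMax n γ (Q.indicator fun _ => (1 : ℝ)) x = volume Q ^ (γ / n) := by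
  have hexp : γ / n - 1 ≤ 0 := by linarith
  apply le_antisymm
  · refine iSup₂_le fun Q' hQ' => iSup_le fun _ => ?_
    rw [lintegral_nnnorm_indicator_one hQ.measurableSet]
    rcases le_total (volume Q') (volume Q) with hle | hle
    · calc volume Q' ^ (γ / n - 1) * volume (Q ∩ Q')
          ≤ volume Q' ^ (γ / n - 1) * volume Q' := by gcongr; exact inter_subset_right
        _ = volume Q' ^ (γ / n) :=
          rpow_sub_one_mul_self hQ'.volume_pos.ne' hQ'.volume_ne_top _
        _ ≤ volume Q ^ (γ / n) := rpow_le_rpow hle h0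
    · calc volume Q' ^ (γ / n - 1) * volume (Q ∩ Q')
          ≤ volume Q ^ (γ / n - 1) * volume Q :=
            mul_le_mul' (rpow_le_rpow_of_nonpos hle hexp) (measure_mono inter_subset_left)
        _ = volume Q ^ (γ / n) := rpow_sub_one_mul_self hQ.volume_pos.ne' hQ.volume_ne_top _
  · calc volume Q ^ (γ / n)
        = volume Q ^ (γ / n - 1)
            * ∫⁻ y in Q, (‖Q.indicator (fun _ => (1 : ℝ)) y‖₊ : ℝ≥0∞) := by
          rw [lintegral_nnnorm_indicator_one hQ.measurableSet, inter_self,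
            rpow_sub_one_mul_self hQ.volume_pos.ne' hQ.volume_ne_top]
      _ ≤ fracMax n γ (Q.indicator fun _ => (1 : ℝ)) x :=
          le_iSup₂_of_le Q hQ (le_iSup_of_le hx le_rfl)

lemma fracMax_abs_mul_indicator_cube (h1 : γ / n ≤ 1) (hQ : IsCube n Q) (hx : x ∈ Q) :
    fracMax n γ (fun y => |b y| * Q.indicator (fun _ => (1 : ℝ)) y) x
      = localFracMax n γ Q b x := by
  have hexp : γ / n - 1 ≤ 0 := by linarith
  apply le_antisymm
  · refine iSup₂_le fun Q' hQ' => iSup_le fun hxQ' => ?_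
    obtain ⟨R, hR, hRQ, hinter, hvol⟩ := hQ.exists_subcube_of_inter hQ'
    rw [lintegral_nnnorm_abs_mul_indicator hQ.measurableSet]
    calc volume Q' ^ (γ / n - 1) * ∫⁻ y in Q' ∩ Q, (‖b y‖₊ : ℝ≥0∞)
        ≤ volume R ^ (γ / n - 1) * ∫⁻ y in R, (‖b y‖₊ : ℝ≥0∞) :=
          mul_le_mul' (rpow_le_rpow_of_nonpos hvol hexp) (lintegral_mono_set hinter)
      _ ≤ localFracMax n γ Q b x :=
          le_iSup₂_of_le R hR (le_iSup₂_of_le (hinter ⟨hxQ', hx⟩) hRQ le_rfl)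
  · refine iSup₂_le fun P hP => iSup₂_le fun hxP hPQ => ?_
    have hcut : ∫⁻ y in P, (‖b y‖₊ : ℝ≥0∞)
        = ∫⁻ y in P, (‖|b y| * Q.indicator (fun _ => (1 : ℝ)) y‖₊ : ℝ≥0∞) := by
      rw [lintegral_nnnorm_abs_mul_indicator hQ.measurableSet, inter_eq_self_of_subset_left hPQ]
    rw [hcut]
    exact le_iSup₂_of_le P hP (le_iSup_of_le hxP le_rfl)

lemma localFracMax_le (h0 : 0 ≤ γ / n) {C : ℝ} (hC : ∀ y ∈ Q, |b y| ≤ C) :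
    localFracMax n γ Q b x ≤ volume Q ^ (γ / n) * ENNReal.ofReal C := by
  refine iSup₂_le fun P hP => iSup₂_le fun _ hPQ => ?_
  have hint : ∫⁻ y in P, (‖b y‖₊ : ℝ≥0∞) ≤ volume P * ENNReal.ofReal C := by
    rw [mul_comm, ← setLIntegral_const]
    refine setLIntegral_mono' hP.measurableSet fun y hy => ?_
    rw [← enorm_eq_nnnorm, Real.enorm_eq_ofReal_abs]
    exact ofReal_le_ofReal (hC y (hPQ hy))
  calc volume P ^ (γ / n - 1) * ∫⁻ y in P, (‖b y‖₊ : ℝ≥0∞)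
      ≤ volume P ^ (γ / n - 1) * volume P * ENNReal.ofReal C := by
        rw [mul_assoc]; gcongr
    _ = volume P ^ (γ / n) * ENNReal.ofReal C := by
        rw [rpow_sub_one_mul_self hP.volume_pos.ne' hP.volume_ne_top]
    _ ≤ volume Q ^ (γ / n) * ENNReal.ofReal C := by gcongr

lemma le_localFracMax (hQ : IsCube n Q) (hx : x ∈ Q) {c : ℝ} (hc : ∀ y ∈ Q, c ≤ |b y|) :
    volume Q ^ (γ / n) * ENNReal.ofReal c ≤ localFracMax n γ Q b x := by
  have hint : volume Q * ENNReal.ofReal c ≤ ∫⁻ y in Q, (‖b y‖₊ : ℝ≥0∞) := by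
    rw [mul_comm, ← setLIntegral_const]
    refine setLIntegral_mono' hQ.measurableSet fun y hy => ?_
    rw [← enorm_eq_nnnorm, Real.enorm_eq_ofReal_abs]
    exact ofReal_le_ofReal (hc y hy)
  calc volume Q ^ (γ / n) * ENNReal.ofReal c
      = volume Q ^ (γ / n - 1) * (volume Q * ENNReal.ofReal c) := by
        rw [← mul_assoc, rpow_sub_one_mul_self hQ.volume_pos.ne' hQ.volume_ne_top]
    _ ≤ volume Q ^ (γ / n - 1) * ∫⁻ y in Q, (‖b y‖₊ : ℝ≥0∞) := by gcongr
    _ ≤ localFracMax n γ Q b x :=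
        le_iSup₂_of_le Q hQ (le_iSup₂_of_le hx subset_rfl le_rfl)

lemma localFracMax_ne_top (h0 : 0 ≤ γ / n) (hQ : IsCube n Q) {C : ℝ}
    (hC : ∀ y ∈ Q, |b y| ≤ C) :
    localFracMax n γ Q b x ≠ ⊤ :=
  ne_top_of_le_ne_top (mul_ne_top (rpow_ne_top_of_nonneg h0 hQ.volume_ne_top) ofReal_ne_top)
    (localFracMax_le h0 hC)

lemma ncomm_abs_indicator_cube (h0 : 0 ≤ γ / n) (h1 : γ / n ≤ 1) (hQ : IsCube n Q)
    (hx : x ∈ Q) :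
    ncomm n γ (fun y => |b y|) (Q.indicator fun _ => (1 : ℝ)) x
      = |b x| * (volume Q ^ (γ / n)).toReal - (localFracMax n γ Q b x).toReal := by
  rw [ncomm, fracMax_indicator_cube h0 h1 hQ hx, fracMax_abs_mul_indicator_cube h1 hQ hx]

lemma abs_ncomm_abs_indicator_cube_le (h0 : 0 ≤ γ / n) (h1 : γ / n ≤ 1) (hQ : IsCube n Q)
    (hx : x ∈ Q) (hδ : ∀ y ∈ Q, |(|b y| - |b x|)| ≤ δ) :
    |ncomm n γ (fun y => |b y|) (Q.indicator fun _ => (1 : ℝ)) x|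
      ≤ (volume Q ^ (γ / n)).toReal * δ := by
  have hδ0 : 0 ≤ δ := (abs_nonneg _).trans (hδ x hx)
  have hv : volume Q ^ (γ / n) ≠ ⊤ := rpow_ne_top_of_nonneg h0 hQ.volume_ne_top
  have hupper : ∀ y ∈ Q, |b y| ≤ |b x| + δ := fun y hy => by
    linarith [(abs_sub_le_iff.1 (hδ y hy)).1]
  have hlower : ∀ y ∈ Q, |b x| - δ ≤ |b y| := fun y hy => by
    linarith [(abs_sub_le_iff.1 (hδ y hy)).2]
  have hM_le := toReal_mono (mul_ne_top hv ofReal_ne_top) (localFracMax_le (x := x) h0 hupper)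
  have hle_M := toReal_mono (localFracMax_ne_top h0 hQ hupper)
    (le_localFracMax (γ := γ) hQ hx hlower)
  rw [toReal_mul, toReal_ofReal (by positivity)] at hM_le
  rw [toReal_mul, toReal_ofReal'] at hle_M
  have hmax := mul_le_mul_of_nonneg_left (le_max_left (|b x| - δ) 0)
    (toReal_nonneg (a := volume Q ^ (γ / n)))
  rw [ncomm_abs_indicator_cube h0 h1 hQ hx]
  exact abs_sub_le_iff.2 ⟨by linarith, by linarith⟩

theorem localFracMax_tsub_add_tsub_le_ncomm (h0 : 0 ≤ α / n) (h1 : α / n ≤ 1)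
    (hQ : IsCube n Q) (hx : x ∈ Q) (hδ : ∀ y ∈ Q, |(|b y| - |b x|)| ≤ δ) :
    (volume Q ^ (-(α / n)) * localFracMax n α Q b x - localFracMax n 0 Q b x)
        + (localFracMax n 0 Q b x - volume Q ^ (-(α / n)) * localFracMax n α Q b x)
      ≤ volume Q ^ (-(α / n)) *
          ENNReal.ofReal |ncomm n α (fun y => |b y|) (Q.indicator fun _ => (1 : ℝ)) x|
        + ENNReal.ofReal |ncomm n 0 (fun y => |b y|) (Q.indicator fun _ => (1 : ℝ)) x| := by
  have hbdd : ∀ y ∈ Q, |b y| ≤ |b x| + δ := fun y hy => by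
    linarith [(abs_sub_le_iff.1 (hδ y hy)).1]
  have hfinα := localFracMax_ne_top (x := x) h0 hQ hbdd
  have hfin0 := localFracMax_ne_top (γ := 0) (x := x) (by simp) hQ hbdd
  set v := (volume Q ^ (α / n)).toReal
  have hv : 0 < v := toReal_pos (rpow_pos hQ.volume_pos hQ.volume_ne_top).ne'
    (rpow_ne_top_of_nonneg h0 hQ.volume_ne_top)
  have hU : volume Q ^ (-(α / n)) = ENNReal.ofReal v⁻¹ := by
    rw [rpow_neg, ofReal_inv_of_pos hv, ofReal_toReal (rpow_ne_top_of_nonneg h0 hQ.volume_ne_top)]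
  rw [hU, tsub_add_tsub_eq_ofReal_abs (mul_ne_top ofReal_ne_top hfinα) hfin0, toReal_mul,
    toReal_ofReal (inv_nonneg.2 hv.le), ncomm_abs_indicator_cube h0 h1 hQ hx,
    ncomm_abs_indicator_cube (by simp) (by simp) hQ hx, ← ofReal_mul (inv_nonneg.2 hv.le),
    ← ofReal_add (by positivity) (abs_nonneg _)]
  simp only [zero_div, rpow_zero, toReal_one, mul_one]
  refine ofReal_le_ofReal ?_
  set m := (localFracMax n α Q b x).toReal
  set m₀ := (localFracMax n 0 Q b x).toReal
  calc |v⁻¹ * m - m₀| = |(|b x| - m₀) - v⁻¹ * (|b x| * v - m)| := by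
        congr 1; field_simp; ring
    _ ≤ |v⁻¹ * (|b x| * v - m)| + |(|b x| - m₀)| := by
        rw [add_comm]; exact abs_sub _ _
    _ = v⁻¹ * |(|b x| * v - m)| + |(|b x| - m₀)| := by
        rw [abs_mul, abs_of_pos (inv_pos.2 hv)]

theorem localFracMax_tsub_add_tsub_le (h0 : 0 ≤ α / n) (h1 : α / n ≤ 1) (hQ : IsCube n Q)
    (hx : x ∈ Q) (hδ : ∀ y ∈ Q, |(|b y| - |b x|)| ≤ δ) :
    (volume Q ^ (-(α / n)) * localFracMax n α Q b x - localFracMax n 0 Q b x)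
        + (localFracMax n 0 Q b x - volume Q ^ (-(α / n)) * localFracMax n α Q b x)
      ≤ ENNReal.ofReal (2 * δ) := by
  have hδ0 : 0 ≤ δ := (abs_nonneg _).trans (hδ x hx)
  have hcommα := abs_ncomm_abs_indicator_cube_le h0 h1 hQ hx hδ
  have hcomm0 := abs_ncomm_abs_indicator_cube_le (γ := 0) (by simp) (by simp) hQ hx hδ
  simp only [zero_div, rpow_zero, toReal_one, one_mul] at hcomm0
  have hv := rpow_ne_top_of_nonneg h0 hQ.volume_ne_top
  calc _ ≤ volume Q ^ (-(α / n)) *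
          ENNReal.ofReal |ncomm n α (fun y => |b y|) (Q.indicator fun _ => (1 : ℝ)) x|
        + ENNReal.ofReal |ncomm n 0 (fun y => |b y|) (Q.indicator fun _ => (1 : ℝ)) x| :=
        localFracMax_tsub_add_tsub_le_ncomm h0 h1 hQ hx hδ
    _ ≤ volume Q ^ (-(α / n)) * ENNReal.ofReal ((volume Q ^ (α / n)).toReal * δ)
        + ENNReal.ofReal δ := by gcongr
    _ = ENNReal.ofReal (2 * δ) := by
        rw [ofReal_mul toReal_nonneg, ofReal_toReal hv, ← mul_assoc, rpow_neg,
          ENNReal.inv_mul_cancel (rpow_pos hQ.volume_pos hQ.volume_ne_top).ne' hv, one_mul,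
          ← ofReal_add hδ0 hδ0, two_mul]

end MaximalFunctions

theorem stmt11_general (n : ℕ) (α β L : ℝ) (hα0 : 0 < α) (hαn : α < n)
    (hβ0 : 0 < β) (hL : 0 ≤ L)
    (b : (Fin n → ℝ) → ℝ) (hb : ∀ x y, |b x - b y| ≤ L * dist x y ^ β) :
    (∀ Q : Set (Fin n → ℝ), IsCube n Q → ∀ x ∈ Q,
      (volume Q ^ (-(α / (n : ℝ))) * localFracMax n α Q b x - localFracMax n 0 Q b x)
        + (localFracMax n 0 Q b x - volume Q ^ (-(α / (n : ℝ))) * localFracMax n α Q b x)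
      ≤ volume Q ^ (-(α / (n : ℝ))) *
          ENNReal.ofReal |ncomm n α (fun y => |b y|) (Q.indicator fun _ => (1 : ℝ)) x|
        + ENNReal.ofReal |ncomm n 0 (fun y => |b y|) (Q.indicator fun _ => (1 : ℝ)) x|) ∧
    ∃ C > (0 : ℝ), ∀ Q : Set (Fin n → ℝ), IsCube n Q →
      volume Q ^ (-(1 + β / (n : ℝ))) *
        ∫⁻ x in Q,
          ((volume Q ^ (-(α / (n : ℝ))) * localFracMax n α Q b x - localFracMax n 0 Q b x)
            + (localFracMax n 0 Q b x
                - volume Q ^ (-(α / (n : ℝ))) * localFracMax n α Q b x))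
      ≤ ENNReal.ofReal (C * L) := by
  have hn : (0 : ℝ) < n := hα0.trans hαn
  have h0 : 0 ≤ α / n := div_nonneg hα0.le hn.le
  have h1 : α / n ≤ 1 := (div_le_one hn).2 hαn.le
  have hosc : ∀ Q, IsCube n Q → ∀ x ∈ Q, ∀ y ∈ Q,
      |(|b y| - |b x|)| ≤ L * (volume Q ^ (β / n)).toReal := fun Q hQ x hx y hy =>
    (abs_abs_sub_abs_le_abs_sub _ _).trans
      (hQ.abs_sub_le_of_holder (Nat.cast_pos.1 hn).ne' hL hβ0.le hb hy hx)
  refine ⟨fun Q hQ x hx => localFracMax_tsub_add_tsub_le_ncomm h0 h1 hQ hx (hosc Q hQ x hx),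
    2, two_pos, fun Q hQ => ?_⟩
  have hV0 := hQ.volume_pos.ne'
  have hVt := hQ.volume_ne_top
  calc _ ≤ volume Q ^ (-(1 + β / n)) *
        ∫⁻ _ in Q, ENNReal.ofReal (2 * (L * (volume Q ^ (β / n)).toReal)) := by
        refine mul_le_mul_right (setLIntegral_mono' hQ.measurableSet fun x hx => ?_) _
        exact localFracMax_tsub_add_tsub_le h0 h1 hQ hx (hosc Q hQ x hx)
    _ = ENNReal.ofReal (2 * L) * (volume Q ^ (-(1 + β / n)) * volume Q ^ (β / n + 1)) := by
        rw [setLIntegral_const, ← mul_assoc 2, ofReal_mul (by positivity),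
          ofReal_toReal (rpow_ne_top_of_nonneg (by positivity) hVt), rpow_add _ _ hV0 hVt,
          rpow_one]
        ring
    _ = ENNReal.ofReal (2 * L) := by
        rw [← rpow_add _ _ hV0 hVt, show -(1 + β / n) + (β / n + 1) = 0 by ring, rpow_zero,
          mul_one]

theorem stmt11 (n : ℕ) (α β L : ℝ) (hα0 : 0 < α) (hαn : α < n)
    (hβ0 : 0 < β) (hβ1 : β < 1) (hαβn : α + β < n) (hL : 0 ≤ L)
    (b : (Fin n → ℝ) → ℝ) (hb : ∀ x y, |b x - b y| ≤ L * dist x y ^ β) :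
    (∀ Q : Set (Fin n → ℝ), IsCube n Q → ∀ x ∈ Q,
      (volume Q ^ (-(α / (n : ℝ))) * localFracMax n α Q b x - localFracMax n 0 Q b x)
        + (localFracMax n 0 Q b x - volume Q ^ (-(α / (n : ℝ))) * localFracMax n α Q b x)
      ≤ volume Q ^ (-(α / (n : ℝ))) *
          ENNReal.ofReal |ncomm n α (fun y => |b y|) (Q.indicator fun _ => (1 : ℝ)) x|
        + ENNReal.ofReal |ncomm n 0 (fun y => |b y|) (Q.indicator fun _ => (1 : ℝ)) x|) ∧
    ∃ C > (0 : ℝ), ∀ Q : Set (Fin n → ℝ), IsCube n Q →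
      volume Q ^ (-(1 + β / (n : ℝ))) *
        ∫⁻ x in Q,
          ((volume Q ^ (-(α / (n : ℝ))) * localFracMax n α Q b x - localFracMax n 0 Q b x)
            + (localFracMax n 0 Q b x
                - volume Q ^ (-(α / (n : ℝ))) * localFracMax n α Q b x))
      ≤ ENNReal.ofReal (C * L) :=
  stmt11_general n α β L hα0 hαn hβ0 hL b hb
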